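/- Let P, P', Q be reversible with respect to π, with P and P' irreducible, and let 0 < a < 1. Then P' efficiency-dominates P if and only if aP' + (1−a)Q efficiency-dominates aP + (1−a)Q. -/

import Mathlib

open Matrix BigOperators Filter

def IsStochastic {n : ℕ} (P : Matrix (Fin n) (Fin n) ℝ) : Prop :=
  (∀ x y, 0 ≤ P x y) ∧ ∀ x, ∑ y, P x y = 1

def IsReversible {n : ℕ} (π : Fin n → ℝ) (P : Matrix (Fin n) (Fin n) ℝ) : Prop :=
  ∀ x y, π x * P x y = π y * P y x

def MatIrreducible {n : ℕ} (P : Matrix (Fin n) (Fin n) ℝ) : Prop :=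
  ∀ x y, ∃ k : ℕ, 0 < (P ^ k) x y

noncomputable def pInner {n : ℕ} (π f g : Fin n → ℝ) : ℝ := ∑ x, f x * g x * π x

noncomputable def autocov {n : ℕ} (π : Fin n → ℝ) (P : Matrix (Fin n) (Fin n) ℝ)
    (f : Fin n → ℝ) (k : ℕ) : ℝ :=
  ∑ x, ∑ y, π x * (f x - ∑ z, π z * f z) * (P ^ k) x y * (f y - ∑ z, π z * f z)

noncomputable def varN {n : ℕ} (π : Fin n → ℝ) (P : Matrix (Fin n) (Fin n) ℝ)
    (f : Fin n → ℝ) (N : ℕ) : ℝ :=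
  ((N : ℝ))⁻¹ * ∑ i ∈ Finset.range N, ∑ j ∈ Finset.range N,
    autocov π P f (max i j - min i j)

def HasAsymptVar {n : ℕ} (π : Fin n → ℝ) (P : Matrix (Fin n) (Fin n) ℝ)
    (f : Fin n → ℝ) (v : ℝ) : Prop :=
  Tendsto (varN π P f) atTop (nhds v)

def EffDom {n : ℕ} (π : Fin n → ℝ) (P Q : Matrix (Fin n) (Fin n) ℝ) : Prop :=
  ∀ (f : Fin n → ℝ) (vP vQ : ℝ),
    HasAsymptVar π P f vP → HasAsymptVar π Q f vQ → vP ≤ vQ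

/-!
Conjugating by `diag √π` turns a `π`-reversible `P` into a symmetric matrix `S` with `S √π = √π`
whose eigenvalues lie in `[-1, 1]`; by irreducibility the eigenvalue `1` occurs only along `√π`.
Expanding the centred, `√π`-weighted version `u` of `f` in an orthonormal eigenbasis of `S`, the
asymptotic variance of `f` is `∑ cⱼ² (1 + λⱼ) / (1 - λⱼ) = 2 ⟪u, (1 - S)⁻¹ u⟫ - ‖u‖²`. The Green
form `⟪u, (1 - S)⁻¹ u⟫` is the supremum over `t` of `2 ⟪u, t⟫ - ⟪t, (1 - S) t⟫`, so `P'`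
efficiency-dominates `P` iff `S' ≤ S` as quadratic forms. Symmetrization is linear, and
`a S' + (1 - a) S_Q ≤ a S + (1 - a) S_Q` iff `S' ≤ S` when `a > 0`.
-/

open Finset Topology

namespace Matrix

variable {ι : Type*} [Fintype ι] [DecidableEq ι]

lemma pow_mulVec_eq_self {A : Matrix ι ι ℝ} {v : ι → ℝ} (hv : A *ᵥ v = v) (k : ℕ) :
    A ^ k *ᵥ v = v := by
  induction k with
  | zero => simp
  | succ k ih => rw [pow_succ', ← mulVec_mulVec, ih, hv]

lemma pow_apply_le_pow_apply {A B : Matrix ι ι ℝ} (hA : ∀ i j, 0 ≤ A i j)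
    (hAB : ∀ i j, A i j ≤ B i j) (k : ℕ) (i j : ι) : (A ^ k) i j ≤ (B ^ k) i j := by
  induction k generalizing j with
  | zero => rfl
  | succ k ih =>
    rw [pow_succ, pow_succ, mul_apply, mul_apply]
    exact sum_le_sum fun l _ => mul_le_mul (ih l) (hAB l j) (hA l j)
      ((pow_apply_nonneg hA k i l).trans (ih l))

namespace IsHermitian

variable {A : Matrix ι ι ℝ} (hA : A.IsHermitian)

noncomputable def eigenCoord (u : ι → ℝ) (j : ι) : ℝ := ⇑(hA.eigenvectorBasis j) ⬝ᵥ u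

lemma eigenCoord_eq_repr (u : ι → ℝ) (j : ι) :
    hA.eigenCoord u j = hA.eigenvectorBasis.repr (WithLp.toLp 2 u) j := by
  rw [OrthonormalBasis.repr_apply_apply, EuclideanSpace.inner_eq_star_dotProduct, eigenCoord,
    dotProduct_comm]
  rfl

lemma dotProduct_eq_sum_eigenCoord (u v : ι → ℝ) :
    u ⬝ᵥ v = ∑ j, hA.eigenCoord u j * hA.eigenCoord v j := by
  have h := hA.eigenvectorBasis.sum_inner_mul_inner (WithLp.toLp 2 u) (WithLp.toLp 2 v)
  simp only [EuclideanSpace.inner_eq_star_dotProduct, star_trivial] at h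
  rw [dotProduct_comm, ← h]
  refine sum_congr rfl fun j _ => ?_
  rw [eigenCoord, eigenCoord, dotProduct_comm v]

lemma eigenCoord_mulVec (v : ι → ℝ) (j : ι) :
    hA.eigenCoord (A *ᵥ v) j = hA.eigenvalues j * hA.eigenCoord v j := by
  rw [eigenCoord, dotProduct_mulVec, ← mulVec_transpose,
    (isHermitian_iff_isSymm.mp hA).eq, mulVec_eigenvectorBasis, smul_dotProduct, smul_eq_mul,
    eigenCoord]

lemma eigenCoord_pow_mulVec (k : ℕ) (v : ι → ℝ) (j : ι) :
    hA.eigenCoord (A ^ k *ᵥ v) j = hA.eigenvalues j ^ k * hA.eigenCoord v j := by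
  induction k with
  | zero => simp
  | succ k ih => rw [pow_succ', ← mulVec_mulVec, eigenCoord_mulVec, ih, pow_succ']; ring

lemma eigenCoord_surjective : Function.Surjective hA.eigenCoord := fun g =>
  ⟨WithLp.ofLp (hA.eigenvectorBasis.repr.symm (WithLp.toLp 2 g)), funext fun j => by
    rw [eigenCoord_eq_repr]; simp⟩

lemma eigenCoord_sub (u v : ι → ℝ) (j : ι) :
    hA.eigenCoord (u - v) j = hA.eigenCoord u j - hA.eigenCoord v j :=
  dotProduct_sub _ _ _

end IsHermitian

def dirichletForm (A : Matrix ι ι ℝ) (t : ι → ℝ) : ℝ := t ⬝ᵥ t - t ⬝ᵥ (A *ᵥ t)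

namespace IsHermitian

variable {A : Matrix ι ι ℝ} (hA : A.IsHermitian)

/-- The quadratic form of `(1 - A)⁻¹`, with the eigenvalue-`1` eigenspace dropped through
`x / 0 = 0`. -/
noncomputable def greenForm (u : ι → ℝ) : ℝ :=
  ∑ j, hA.eigenCoord u j ^ 2 / (1 - hA.eigenvalues j)

lemma dirichletForm_eq_sum (t : ι → ℝ) :
    dirichletForm A t = ∑ j, (1 - hA.eigenvalues j) * hA.eigenCoord t j ^ 2 := by
  rw [dirichletForm, hA.dotProduct_eq_sum_eigenCoord, hA.dotProduct_eq_sum_eigenCoord,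
    ← sum_sub_distrib]
  refine sum_congr rfl fun j _ => ?_
  rw [eigenCoord_mulVec]
  ring

lemma greenForm_sub_mulVec (t : ι → ℝ) :
    hA.greenForm (t - A *ᵥ t) = dirichletForm A t := by
  rw [hA.dirichletForm_eq_sum, greenForm]
  refine sum_congr rfl fun j _ => ?_
  rw [eigenCoord_sub, eigenCoord_mulVec]
  by_cases hj : 1 - hA.eigenvalues j = 0
  · simp [hj]
  · field_simp

lemma isGreatest_greenForm (hle : ∀ j, hA.eigenvalues j ≤ 1) {u : ι → ℝ}
    (hu : ∀ j, hA.eigenvalues j = 1 → hA.eigenCoord u j = 0) :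
    IsGreatest (Set.range fun t => 2 * (u ⬝ᵥ t) - dirichletForm A t) (hA.greenForm u) := by
  simp only [hA.dirichletForm_eq_sum, hA.dotProduct_eq_sum_eigenCoord u, greenForm, mul_sum,
    ← sum_sub_distrib]
  constructor
  · obtain ⟨t, ht⟩ := hA.eigenCoord_surjective fun j => hA.eigenCoord u j / (1 - hA.eigenvalues j)
    refine ⟨t, sum_congr rfl fun j _ => ?_⟩
    simp only [ht]
    by_cases hj : hA.eigenvalues j = 1
    · simp [hu j hj]
    · have : 1 - hA.eigenvalues j ≠ 0 := sub_ne_zero.2 (Ne.symm hj)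
      field_simp
      ring
  · rintro _ ⟨t, rfl⟩
    refine sum_le_sum fun j _ => ?_
    by_cases hj : hA.eigenvalues j = 1
    · simp [hj, hu j hj]
    · -- completing the square: `c² / e - (2 c d - e d²) = (c - e d)² / e`
      have he : 0 < 1 - hA.eigenvalues j := sub_pos.2 ((hle j).lt_of_ne hj)
      rw [le_div_iff₀ he]
      nlinarith [sq_nonneg (hA.eigenCoord u j - (1 - hA.eigenvalues j) * hA.eigenCoord t j)]

end IsHermitian

end Matrix

lemma sum_range_pow_sub {l : ℝ} (hl : l ≠ 1) (N : ℕ) :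
    ∑ j ∈ range N, l ^ (N - j) = l * ((l ^ N - 1) / (l - 1)) := by
  rw [← sum_range_reflect, ← geom_sum_eq hl, mul_sum]
  refine sum_congr rfl fun j hj => ?_
  rw [← pow_succ']
  congr 1
  have := mem_range.1 hj
  omega

lemma sum_range_sum_range_pow_dist {l : ℝ} (hl : l ≠ 1) (N : ℕ) :
    ∑ i ∈ range N, ∑ j ∈ range N, l ^ (max i j - min i j)
      = N * (1 + l) / (1 - l) - 2 * l * (1 - l ^ N) / (1 - l) ^ 2 := by
  have h1 : 1 - l ≠ 0 := sub_ne_zero.2 hl.symm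
  have h2 : l - 1 ≠ 0 := sub_ne_zero.2 hl
  induction N with
  | zero => simp
  | succ N ih =>
    have hrow : ∀ i ∈ range N, ∑ j ∈ range (N + 1), l ^ (max i j - min i j)
        = ∑ j ∈ range N, l ^ (max i j - min i j) + l ^ (N - i) := fun i hi => by
      rw [sum_range_succ]
      congr 2
      have := mem_range.1 hi
      omega
    have hlast : ∑ j ∈ range (N + 1), l ^ (max N j - min N j)
        = ∑ j ∈ range N, l ^ (N - j) + 1 := by
      rw [sum_range_succ]
      congr 1
      · refine sum_congr rfl fun j hj => ?_
        have := mem_range.1 hj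
        congr 1
        omega
      · simp
    rw [sum_range_succ, sum_congr rfl hrow, sum_add_distrib, ih, hlast, sum_range_pow_sub hl]
    push_cast
    field_simp
    ring

lemma tendsto_cesaro_pow_dist {l : ℝ} (hl₁ : -1 ≤ l) (hl₂ : l < 1) :
    Tendsto (fun N : ℕ => (N : ℝ)⁻¹ * ∑ i ∈ range N, ∑ j ∈ range N, l ^ (max i j - min i j))
      atTop (𝓝 ((1 + l) / (1 - l))) := by
  have h1 : 1 - l ≠ 0 := sub_ne_zero.2 hl₂.ne'
  have hpow : Tendsto (fun N : ℕ => (N : ℝ)⁻¹ * (1 - l ^ N)) atTop (𝓝 0) := by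
    refine (tendsto_inv_atTop_zero.comp tendsto_natCast_atTop_atTop).zero_mul_isBoundedUnder_le ?_
    refine isBoundedUnder_of ⟨2, fun N => ?_⟩
    have : |l| ^ N ≤ 1 := pow_le_one₀ (abs_nonneg l) (abs_le.2 ⟨hl₁, hl₂.le⟩)
    calc ‖1 - l ^ N‖ ≤ ‖(1 : ℝ)‖ + ‖l ^ N‖ := norm_sub_le _ _
      _ ≤ 2 := by rw [norm_pow, Real.norm_eq_abs]; norm_num; linarith
  have hlim := (hpow.const_mul (2 * l / (1 - l) ^ 2)).const_sub ((1 + l) / (1 - l))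
  rw [mul_zero, sub_zero] at hlim
  refine hlim.congr' ?_
  filter_upwards [eventually_ne_atTop 0] with N hN
  rw [sum_range_sum_range_pow_dist hl₂.ne]
  field_simp

section ReversibleChains

variable {n : ℕ} {π : Fin n → ℝ} {P P' Q R : Matrix (Fin n) (Fin n) ℝ}

lemma isStochastic_iff_mem_rowStochastic : IsStochastic P ↔ P ∈ rowStochastic ℝ (Fin n) :=
  mem_rowStochastic_iff_sum.symm

lemma IsStochastic.pow (hP : IsStochastic P) (k : ℕ) : IsStochastic (P ^ k) :=
  isStochastic_iff_mem_rowStochastic.2 (pow_mem (isStochastic_iff_mem_rowStochastic.1 hP) k)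

lemma IsStochastic.add_smul (hP : IsStochastic P) (hQ : IsStochastic Q) {a b : ℝ} (ha : 0 ≤ a)
    (hb : 0 ≤ b) (hab : a + b = 1) : IsStochastic (a • P + b • Q) :=
  isStochastic_iff_mem_rowStochastic.2 <| convex_rowStochastic
    (isStochastic_iff_mem_rowStochastic.1 hP) (isStochastic_iff_mem_rowStochastic.1 hQ) ha hb hab

lemma IsReversible.add_smul (hP : IsReversible π P) (hQ : IsReversible π Q) (a b : ℝ) :
    IsReversible π (a • P + b • Q) := fun x y => by
  simp only [Matrix.add_apply, Matrix.smul_apply, smul_eq_mul]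
  linear_combination a * hP x y + b * hQ x y

lemma MatIrreducible.mono (hP : ∀ x y, 0 ≤ P x y) (hPR : ∀ x y, P x y ≤ R x y)
    (hirr : MatIrreducible P) : MatIrreducible R := fun x y =>
  let ⟨k, hk⟩ := hirr x y
  ⟨k, hk.trans_le (pow_apply_le_pow_apply hP hPR k x y)⟩

lemma MatIrreducible.smul (hirr : MatIrreducible P) {a : ℝ} (ha : 0 < a) :
    MatIrreducible (a • P) := fun x y =>
  let ⟨k, hk⟩ := hirr x y
  ⟨k, by rw [smul_pow, Matrix.smul_apply, smul_eq_mul]; positivity⟩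

lemma MatIrreducible.add_smul (hirr : MatIrreducible P) (hP : ∀ x y, 0 ≤ P x y)
    (hQ : ∀ x y, 0 ≤ Q x y) {a b : ℝ} (ha : 0 < a) (hb : 0 ≤ b) :
    MatIrreducible (a • P + b • Q) :=
  (hirr.smul ha).mono (fun x y => mul_nonneg ha.le (hP x y)) fun x y =>
    le_add_of_nonneg_right (mul_nonneg hb (hQ x y))

lemma IsStochastic.apply_eq_of_mulVec_eq_self (hP : IsStochastic P) {v : Fin n → ℝ}
    (hv : P *ᵥ v = v) {x z : Fin n} (hx : ∀ y, v y ≤ v x) (hxz : 0 < P x z) : v z = v x := by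
  have hsum : ∑ y, P x y * (v x - v y) = 0 := by
    have hvx : ∑ y, P x y * v y = v x := congrFun hv x
    simp only [mul_sub, sum_sub_distrib, ← sum_mul, hvx]
    rw [hP.2 x, one_mul, sub_self]
  have hterm := (sum_eq_zero_iff_of_nonneg fun y _ =>
    mul_nonneg (hP.1 x y) (sub_nonneg.2 (hx y))).1 hsum z (mem_univ z)
  linarith [(mul_eq_zero.1 hterm).resolve_left hxz.ne']

lemma IsStochastic.eq_of_mulVec_eq_self (hP : IsStochastic P) (hirr : MatIrreducible P)
    {v : Fin n → ℝ} (hv : P *ᵥ v = v) (x y : Fin n) : v x = v y := by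
  obtain ⟨x₀, -, hx₀⟩ := exists_max_image univ v ⟨x, mem_univ x⟩
  have hconst (z : Fin n) : v z = v x₀ := by
    obtain ⟨k, hk⟩ := hirr x₀ z
    exact (hP.pow k).apply_eq_of_mulVec_eq_self (pow_mulVec_eq_self hv k)
      (fun y => hx₀ y (mem_univ y)) hk
  rw [hconst x, hconst y]

lemma IsStochastic.abs_le_one_of_mulVec_eq_smul (hP : IsStochastic P) {v : Fin n → ℝ}
    (hv₀ : v ≠ 0) {c : ℝ} (hv : P *ᵥ v = c • v) : |c| ≤ 1 := by
  obtain ⟨x₁, hx₁⟩ := Function.ne_iff.1 hv₀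
  obtain ⟨x₀, -, hx₀⟩ := exists_max_image univ (fun x => |v x|) ⟨x₁, mem_univ x₁⟩
  have hpos : 0 < |v x₀| := (abs_pos.2 hx₁).trans_le (hx₀ x₁ (mem_univ x₁))
  have hx₀v : ∑ y, P x₀ y * v y = c * v x₀ := congrFun hv x₀
  have hle : |c| * |v x₀| ≤ 1 * |v x₀| :=
    calc |c| * |v x₀| = |∑ y, P x₀ y * v y| := by rw [hx₀v, abs_mul]
      _ ≤ ∑ y, P x₀ y * |v x₀| := (abs_sum_le_sum_abs _ _).trans <| sum_le_sum fun y _ => by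
          rw [abs_mul, abs_of_nonneg (hP.1 x₀ y)]
          exact mul_le_mul_of_nonneg_left (hx₀ y (mem_univ y)) (hP.1 x₀ y)
      _ = 1 * |v x₀| := by rw [← sum_mul, hP.2 x₀]
  exact le_of_mul_le_mul_right hle hpos

noncomputable def symmetrize (π : Fin n → ℝ) (P : Matrix (Fin n) (Fin n) ℝ) :
    Matrix (Fin n) (Fin n) ℝ :=
  diagonal (Real.sqrt ∘ π) * P * diagonal (Real.sqrt ∘ π)⁻¹

noncomputable def weightedDeviation (π f : Fin n → ℝ) : Fin n → ℝ :=
  fun x => √(π x) * (f x - ∑ z, π z * f z)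

lemma symmetrize_apply (x y : Fin n) : symmetrize π P x y = √(π x) * P x y / √(π y) := by
  simp [symmetrize, div_eq_mul_inv]

lemma symmetrize_add_smul (a b : ℝ) :
    symmetrize π (a • P + b • Q) = a • symmetrize π P + b • symmetrize π Q := by
  simp only [symmetrize, Matrix.mul_add, Matrix.add_mul, Matrix.mul_smul, Matrix.smul_mul]

section PositiveWeights

variable (hπ : ∀ x, 0 < π x)
include hπ

lemma diagonal_sqrt_mul_inv : diagonal (Real.sqrt ∘ π) * diagonal (Real.sqrt ∘ π)⁻¹ = 1 := by
  rw [diagonal_mul_diagonal, ← diagonal_one]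
  exact congrArg diagonal (funext fun x => mul_inv_cancel₀ (Real.sqrt_pos.2 (hπ x)).ne')

lemma diagonal_sqrt_inv_mul : diagonal (Real.sqrt ∘ π)⁻¹ * diagonal (Real.sqrt ∘ π) = 1 := by
  rw [diagonal_mul_diagonal, ← diagonal_one]
  exact congrArg diagonal (funext fun x => inv_mul_cancel₀ (Real.sqrt_pos.2 (hπ x)).ne')

lemma symmetrize_pow (k : ℕ) : symmetrize π P ^ k = symmetrize π (P ^ k) := by
  induction k with
  | zero => rw [pow_zero, pow_zero, symmetrize, Matrix.mul_one, diagonal_sqrt_mul_inv hπ]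
  | succ k ih =>
    rw [pow_succ, ih, symmetrize, symmetrize, symmetrize, pow_succ]
    simp only [Matrix.mul_assoc, ← Matrix.mul_assoc (diagonal (Real.sqrt ∘ π)⁻¹),
      diagonal_sqrt_inv_mul hπ, Matrix.one_mul]

lemma isHermitian_symmetrize (hrev : IsReversible π P) : (symmetrize π P).IsHermitian := by
  refine isHermitian_iff_isSymm.2 (IsSymm.ext fun x y => ?_)
  have hx := Real.sqrt_pos.2 (hπ x)
  have hy := Real.sqrt_pos.2 (hπ y)
  rw [symmetrize_apply, symmetrize_apply, div_eq_div_iff hx.ne' hy.ne']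
  linear_combination (Real.sq_sqrt (hπ y).le) * P y x - (Real.sq_sqrt (hπ x).le) * P x y - hrev x y

lemma symmetrize_mulVec_sqrt (hP : IsStochastic P) :
    symmetrize π P *ᵥ (Real.sqrt ∘ π) = Real.sqrt ∘ π := by
  have hone : diagonal (Real.sqrt ∘ π)⁻¹ *ᵥ (Real.sqrt ∘ π) = 1 := by
    funext x
    simp [mulVec_diagonal, inv_mul_cancel₀ (Real.sqrt_pos.2 (hπ x)).ne']
  rw [symmetrize, ← mulVec_mulVec, ← mulVec_mulVec, hone,
    one_vecMul_of_mem_rowStochastic (isStochastic_iff_mem_rowStochastic.1 hP)]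
  funext x
  simp [mulVec_diagonal]

lemma sqrt_dotProduct_symmetrize_mulVec (hP : IsStochastic P) (hrev : IsReversible π P)
    (t : Fin n → ℝ) : (Real.sqrt ∘ π) ⬝ᵥ (symmetrize π P *ᵥ t) = (Real.sqrt ∘ π) ⬝ᵥ t := by
  rw [dotProduct_mulVec, ← mulVec_transpose,
    (isHermitian_iff_isSymm.1 (isHermitian_symmetrize hπ hrev)).eq, symmetrize_mulVec_sqrt hπ hP]

lemma mulVec_of_symmetrize_mulVec_eq_smul {v : Fin n → ℝ} {c : ℝ}
    (hv : symmetrize π P *ᵥ v = c • v) :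
    P *ᵥ (diagonal (Real.sqrt ∘ π)⁻¹ *ᵥ v) = c • (diagonal (Real.sqrt ∘ π)⁻¹ *ᵥ v) := by
  rw [← mulVec_smul, ← hv, symmetrize, ← one_mulVec (P *ᵥ _), ← diagonal_sqrt_inv_mul hπ]
  simp only [mulVec_mulVec, Matrix.mul_assoc]

lemma autocov_eq_dotProduct (f : Fin n → ℝ) (k : ℕ) :
    autocov π P f k = weightedDeviation π f ⬝ᵥ (symmetrize π P ^ k *ᵥ weightedDeviation π f) := by
  simp only [symmetrize_pow hπ, autocov, dotProduct, mulVec, symmetrize_apply,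
    weightedDeviation, mul_sum]
  refine sum_congr rfl fun x _ => sum_congr rfl fun y _ => ?_
  have hy := (Real.sqrt_pos.2 (hπ y)).ne'
  field_simp
  rw [Real.sq_sqrt (hπ x).le]
  ring

lemma sqrt_dotProduct_weightedDeviation (hπsum : ∑ x, π x = 1) (f : Fin n → ℝ) :
    (Real.sqrt ∘ π) ⬝ᵥ weightedDeviation π f = 0 := by
  simp only [dotProduct, weightedDeviation, Function.comp_apply, ← mul_assoc,
    Real.mul_self_sqrt (hπ _).le, mul_sub, sum_sub_distrib, ← sum_mul, hπsum, one_mul, sub_self]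

lemma weightedDeviation_inv_sqrt_mul {u : Fin n → ℝ} (hu : (Real.sqrt ∘ π) ⬝ᵥ u = 0) :
    weightedDeviation π ((Real.sqrt ∘ π)⁻¹ * u) = u := by
  have hmean : ∑ z, π z * ((√(π z))⁻¹ * u z) = 0 := by
    rw [← hu]
    refine sum_congr rfl fun z _ => ?_
    have hz := (Real.sqrt_pos.2 (hπ z)).ne'
    field_simp
    rw [Function.comp_apply, mul_right_comm, Real.mul_self_sqrt (hπ z).le]
  funext x
  have hx := (Real.sqrt_pos.2 (hπ x)).ne'
  simp only [weightedDeviation, Pi.mul_apply, Pi.inv_apply, Function.comp_apply, hmean, sub_zero]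
  field_simp

end PositiveWeights

section Spectrum

variable (hπ : ∀ x, 0 < π x) (hP : IsStochastic P) (hS : (symmetrize π P).IsHermitian)
include hπ hP

lemma abs_eigenvalues_symmetrize_le_one (j : Fin n) : |hS.eigenvalues j| ≤ 1 := by
  refine hP.abs_le_one_of_mulVec_eq_smul (fun h0 => ?_)
    (mulVec_of_symmetrize_mulVec_eq_smul hπ (hS.mulVec_eigenvectorBasis j))
  apply hS.eigenvectorBasis.orthonormal.ne_zero j
  have := congrArg (diagonal (Real.sqrt ∘ π) *ᵥ ·) h0
  simp only [mulVec_mulVec, diagonal_sqrt_mul_inv hπ, one_mulVec, mulVec_zero] at this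
  exact WithLp.ofLp_injective 2 this

lemma eigenCoord_symmetrize_eq_zero (hirr : MatIrreducible P) {u : Fin n → ℝ}
    (hu : (Real.sqrt ∘ π) ⬝ᵥ u = 0) {j : Fin n} (hj : hS.eigenvalues j = 1) :
    hS.eigenCoord u j = 0 := by
  set h := diagonal (Real.sqrt ∘ π)⁻¹ *ᵥ ⇑(hS.eigenvectorBasis j) with hh
  have hfix : P *ᵥ h = h := by
    have := mulVec_of_symmetrize_mulVec_eq_smul hπ (hS.mulVec_eigenvectorBasis j)
    rwa [hj, one_smul] at this
  have hb : ⇑(hS.eigenvectorBasis j) = h j • (Real.sqrt ∘ π) := by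
    have hdef : diagonal (Real.sqrt ∘ π) *ᵥ h = ⇑(hS.eigenvectorBasis j) := by
      rw [hh, mulVec_mulVec, diagonal_sqrt_mul_inv hπ, one_mulVec]
    rw [← hdef]
    funext x
    rw [mulVec_diagonal, hP.eq_of_mulVec_eq_self hirr hfix x j, Pi.smul_apply, smul_eq_mul,
      mul_comm]
  rw [IsHermitian.eigenCoord, hb, smul_dotProduct, hu, smul_zero]

lemma isGreatest_greenForm_symmetrize (hirr : MatIrreducible P) {u : Fin n → ℝ}
    (hu : (Real.sqrt ∘ π) ⬝ᵥ u = 0) :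
    IsGreatest (Set.range fun t => 2 * (u ⬝ᵥ t) - dirichletForm (symmetrize π P) t)
      (hS.greenForm u) :=
  hS.isGreatest_greenForm (fun j => (abs_le.1 (abs_eigenvalues_symmetrize_le_one hπ hP hS j)).2)
    fun _ hj => eigenCoord_symmetrize_eq_zero hπ hP hS hirr hu hj

lemma hasAsymptVar_symmetrize (hπsum : ∑ x, π x = 1) (hirr : MatIrreducible P)
    (f : Fin n → ℝ) :
    HasAsymptVar π P f (2 * hS.greenForm (weightedDeviation π f)
      - weightedDeviation π f ⬝ᵥ weightedDeviation π f) := by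
  set u := weightedDeviation π f
  have hu : (Real.sqrt ∘ π) ⬝ᵥ u = 0 := sqrt_dotProduct_weightedDeviation hπ hπsum f
  have hvar : varN π P f = fun N : ℕ => ∑ j, hS.eigenCoord u j ^ 2 *
      ((N : ℝ)⁻¹ * ∑ i ∈ range N, ∑ k ∈ range N, hS.eigenvalues j ^ (max i k - min i k)) := by
    funext N
    simp only [varN, autocov_eq_dotProduct hπ, hS.dotProduct_eq_sum_eigenCoord,
      hS.eigenCoord_pow_mulVec, mul_sum]
    simp_rw [sum_comm (s := range N) (t := (univ : Finset (Fin n)))]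
    exact sum_congr rfl fun _ _ => sum_congr rfl fun _ _ => sum_congr rfl fun _ _ => by ring
  rw [HasAsymptVar, hvar, IsHermitian.greenForm, mul_sum, hS.dotProduct_eq_sum_eigenCoord,
    ← sum_sub_distrib]
  refine tendsto_finsetSum _ fun j _ => ?_
  by_cases hj : hS.eigenvalues j = 1
  · simp [eigenCoord_symmetrize_eq_zero hπ hP hS hirr hu hj]
  · have habs := abs_le.1 (abs_eigenvalues_symmetrize_le_one hπ hP hS j)
    have hne : 1 - hS.eigenvalues j ≠ 0 := sub_ne_zero.2 (Ne.symm hj)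
    convert (tendsto_cesaro_pow_dist habs.1 (habs.2.lt_of_ne hj)).const_mul
      (hS.eigenCoord u j ^ 2) using 2
    field_simp
    ring

end Spectrum

lemma greenForm_symmetrize_le_iff (hπ : ∀ x, 0 < π x) (hP : IsStochastic P)
    (hrev : IsReversible π P) (hirr : MatIrreducible P) (hP' : IsStochastic P')
    (hirr' : MatIrreducible P') (hS : (symmetrize π P).IsHermitian)
    (hS' : (symmetrize π P').IsHermitian) :
    (∀ u, (Real.sqrt ∘ π) ⬝ᵥ u = 0 → hS'.greenForm u ≤ hS.greenForm u) ↔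
      ∀ t, t ⬝ᵥ (symmetrize π P' *ᵥ t) ≤ t ⬝ᵥ (symmetrize π P *ᵥ t) := by
  constructor
  · intro h t
    -- test `t` against `u = t - S t`, whose Green form is the Dirichlet form of `t`
    have hu : (Real.sqrt ∘ π) ⬝ᵥ (t - symmetrize π P *ᵥ t) = 0 := by
      rw [dotProduct_sub, sqrt_dotProduct_symmetrize_mulVec hπ hP hrev, sub_self]
    have hle := h _ hu
    have hmax := (isGreatest_greenForm_symmetrize hπ hP' hS' hirr' hu).2 ⟨t, rfl⟩
    rw [hS.greenForm_sub_mulVec] at hle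
    simp only [dirichletForm, sub_dotProduct, dotProduct_comm (symmetrize π P *ᵥ t)] at hle hmax
    linarith
  · intro h u hu
    obtain ⟨t, ht⟩ := (isGreatest_greenForm_symmetrize hπ hP' hS' hirr' hu).1
    refine ht ▸ le_trans ?_ ((isGreatest_greenForm_symmetrize hπ hP hS hirr hu).2 ⟨t, rfl⟩)
    simp only [dirichletForm]
    linarith [h t]

lemma effDom_iff_greenForm_le (hπ : ∀ x, 0 < π x) (hπsum : ∑ x, π x = 1)
    (hP : IsStochastic P) (hirr : MatIrreducible P) (hP' : IsStochastic P')
    (hirr' : MatIrreducible P') (hS : (symmetrize π P).IsHermitian)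
    (hS' : (symmetrize π P').IsHermitian) :
    EffDom π P' P ↔ ∀ u, (Real.sqrt ∘ π) ⬝ᵥ u = 0 → hS'.greenForm u ≤ hS.greenForm u := by
  have hvar := hasAsymptVar_symmetrize hπ hP hS hπsum hirr
  have hvar' := hasAsymptVar_symmetrize hπ hP' hS' hπsum hirr'
  constructor
  · intro h u hu
    have hle := h _ _ _ (hvar' ((Real.sqrt ∘ π)⁻¹ * u)) (hvar ((Real.sqrt ∘ π)⁻¹ * u))
    rw [weightedDeviation_inv_sqrt_mul hπ hu] at hle
    linarith
  · intro h f v' v hv' hv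
    rw [tendsto_nhds_unique hv' (hvar' f), tendsto_nhds_unique hv (hvar f)]
    linarith [h _ (sqrt_dotProduct_weightedDeviation hπ hπsum f)]

lemma effDom_iff_dotProduct_symmetrize_mulVec_le (hπ : ∀ x, 0 < π x) (hπsum : ∑ x, π x = 1)
    (hP : IsStochastic P) (hrev : IsReversible π P) (hirr : MatIrreducible P)
    (hP' : IsStochastic P') (hrev' : IsReversible π P') (hirr' : MatIrreducible P') :
    EffDom π P' P ↔ ∀ t, t ⬝ᵥ (symmetrize π P' *ᵥ t) ≤ t ⬝ᵥ (symmetrize π P *ᵥ t) :=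
  (effDom_iff_greenForm_le hπ hπsum hP hirr hP' hirr' (isHermitian_symmetrize hπ hrev)
    (isHermitian_symmetrize hπ hrev')).trans
    (greenForm_symmetrize_le_iff hπ hP hrev hirr hP' hirr' _ _)

lemma dotProduct_symmetrize_add_smul_mulVec (a b : ℝ) (t : Fin n → ℝ) :
    t ⬝ᵥ (symmetrize π (a • P + b • Q) *ᵥ t)
      = a * (t ⬝ᵥ (symmetrize π P *ᵥ t)) + b * (t ⬝ᵥ (symmetrize π Q *ᵥ t)) := by
  rw [symmetrize_add_smul, add_mulVec, smul_mulVec, smul_mulVec, dotProduct_add,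
    dotProduct_smul, dotProduct_smul, smul_eq_mul, smul_eq_mul]

end ReversibleChains

theorem stmt9 {n : ℕ} (π : Fin n → ℝ) (P P' Q : Matrix (Fin n) (Fin n) ℝ)
    (hπpos : ∀ x, 0 < π x) (hπsum : ∑ x, π x = 1)
    (hP : IsStochastic P) (hP' : IsStochastic P') (hQ : IsStochastic Q)
    (hrevP : IsReversible π P) (hrevP' : IsReversible π P') (hrevQ : IsReversible π Q)
    (hirrP : MatIrreducible P) (hirrP' : MatIrreducible P')
    (a : ℝ) (ha0 : 0 < a) (ha1 : a < 1) :
    EffDom π P' P ↔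
      EffDom π (a • P' + (1 - a) • Q) (a • P + (1 - a) • Q) := by
  have hmix {R : Matrix (Fin n) (Fin n) ℝ} (hR : IsStochastic R) (hrevR : IsReversible π R)
      (hirrR : MatIrreducible R) :
      IsStochastic (a • R + (1 - a) • Q) ∧ IsReversible π (a • R + (1 - a) • Q) ∧
        MatIrreducible (a • R + (1 - a) • Q) :=
    ⟨hR.add_smul hQ ha0.le (by linarith) (by ring), hrevR.add_smul hrevQ a (1 - a),
      hirrR.add_smul hR.1 hQ.1 ha0 (by linarith)⟩
  obtain ⟨hM, hrevM, hirrM⟩ := hmix hP hrevP hirrP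
  obtain ⟨hM', hrevM', hirrM'⟩ := hmix hP' hrevP' hirrP'
  rw [effDom_iff_dotProduct_symmetrize_mulVec_le hπpos hπsum hP hrevP hirrP hP' hrevP' hirrP',
    effDom_iff_dotProduct_symmetrize_mulVec_le hπpos hπsum hM hrevM hirrM hM' hrevM' hirrM']
  simp only [dotProduct_symmetrize_add_smul_mulVec, add_le_add_iff_right,
    mul_le_mul_iff_right₀ ha0]
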